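/- The mutual entropy is bounded by the relative entropy to any product reference state: if ϖ is a positive definite density matrix on ℂ^m ⊗ ℂ^n, σ_L a positive definite density matrix on ℂ^m, and σ_R a positive definite density matrix on ℂ^n, then I_ϖ(A:B) ≤ S(ϖ | σ_L ⊗ σ_R). -/

import Mathlib

/-!
Since `log (σL ⊗ σR) = log σL ⊗ 1 + 1 ⊗ log σR` and `Tr (ϖ (X ⊗ 1)) = Tr (ϖ_A X)`, the relative
entropy splits as `S(ϖ | σL ⊗ σR) = S(ϖ_A | σL) + S(ϖ_B | σR) + I_ϖ(A:B)`, and the two relative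
entropies on the right are nonnegative (Klein's inequality).

Klein's inequality is proved in eigenbases: if `D = U diag(λ) U*` and `E = V diag(μ) V*`, then
`Tr (D log E) = ∑ᵢⱼ |(V* U)ⱼᵢ|² λᵢ log μⱼ`, the matrix `(|(V* U)ⱼᵢ|²)` is doubly stochastic, and
the claim reduces to the scalar inequality `a (log a - log b) ≥ a - b`.
-/

open scoped Kronecker ComplexOrder
open Matrix

noncomputable section

namespace TAL

/-- A density matrix: positive semidefinite with trace `1`. -/
def IsDensityMatrix {k : Type*} [Fintype k] [DecidableEq k] (D : Matrix k k ℂ) : Prop :=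
  D.PosSemidef ∧ D.trace = 1

/-- Functional calculus for Hermitian matrices via the spectral decomposition
(junk value `0` on non-Hermitian matrices). -/
def hermCalc {k : Type*} [Fintype k] [DecidableEq k] (f : ℝ → ℝ) (A : Matrix k k ℂ) :
    Matrix k k ℂ :=
  if hA : A.IsHermitian then
    (hA.eigenvectorUnitary : Matrix k k ℂ) *
      Matrix.diagonal (fun i => (f (hA.eigenvalues i) : ℂ)) *
        star (hA.eigenvectorUnitary : Matrix k k ℂ)
  else 0

/-- Matrix logarithm via the spectral decomposition. -/
def matLog {k : Type*} [Fintype k] [DecidableEq k] (A : Matrix k k ℂ) : Matrix k k ℂ :=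
  hermCalc Real.log A

/-- The von Neumann entropy `S(D) = -Tr (D log D)`, computed through the eigenvalues,
with the convention `0 * log 0 = 0` (junk value `0` on non-Hermitian matrices). -/
def vnEntropy {k : Type*} [Fintype k] [DecidableEq k] (A : Matrix k k ℂ) : ℝ :=
  if hA : A.IsHermitian then ∑ i, Real.negMulLog (hA.eigenvalues i) else 0

/-- The Umegaki relative entropy `S(D | E) = Tr (D (log D - log E))`. -/
def relEntropy {k : Type*} [Fintype k] [DecidableEq k] (D E : Matrix k k ℂ) : ℝ :=
  ((D * (matLog D - matLog E)).trace).re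

/-- Partial trace over the second (right) tensor factor. -/
def ptraceR {k₁ k₂ : Type*} [Fintype k₂] (D : Matrix (k₁ × k₂) (k₁ × k₂) ℂ) :
    Matrix k₁ k₁ ℂ :=
  Matrix.of fun i j => ∑ s : k₂, D (i, s) (j, s)

/-- Partial trace over the first (left) tensor factor. -/
def ptraceL {k₁ k₂ : Type*} [Fintype k₁] (D : Matrix (k₁ × k₂) (k₁ × k₂) ℂ) :
    Matrix k₂ k₂ ℂ :=
  Matrix.of fun i j => ∑ s : k₁, D (s, i) (s, j)

/-- The mutual entropy `I_D(A:B) = S(D_A) + S(D_B) - S(D)`. -/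
def mutualEntropy {k₁ k₂ : Type*} [Fintype k₁] [Fintype k₂] [DecidableEq k₁] [DecidableEq k₂]
    (D : Matrix (k₁ × k₂) (k₁ × k₂) ℂ) : ℝ :=
  vnEntropy (ptraceR D) + vnEntropy (ptraceL D) - vnEntropy D

/-- The Gibbs density matrix `e^{-β H} / Tr(e^{-β H})`. -/
def gibbs {k : Type*} [Fintype k] [DecidableEq k] (β : ℝ) (H : Matrix k k ℂ) :
    Matrix k k ℂ :=
  (NormedSpace.exp ((-(β : ℂ)) • H)).trace⁻¹ • NormedSpace.exp ((-(β : ℂ)) • H)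

/-- The free energy functional `F(D) = Tr(H D) - β⁻¹ S(D)` (real part of the trace). -/
def freeEnergy {k : Type*} [Fintype k] [DecidableEq k] (β : ℝ) (H D : Matrix k k ℂ) : ℝ :=
  ((H * D).trace).re - β⁻¹ * vnEntropy D

/-- The ℓ²-operator norm of a matrix. -/
def opNorm {k : Type*} [Fintype k] [DecidableEq k] (A : Matrix k k ℂ) : ℝ :=
  ‖(Matrix.toEuclideanCLM (𝕜 := ℂ) A : EuclideanSpace ℂ k →L[ℂ] EuclideanSpace ℂ k)‖

/-- The trace norm `‖X‖₁ = Tr ((X* X)^{1/2})`. -/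
def traceNorm {k : Type*} [Fintype k] [DecidableEq k] (X : Matrix k k ℂ) : ℝ :=
  (((Matrix.posSemidef_conjTranspose_mul_self X).1.eigenvectorUnitary : Matrix k k ℂ) *
    Matrix.diagonal (((↑) : ℝ → ℂ) ∘ (√·) ∘ (Matrix.posSemidef_conjTranspose_mul_self X).1.eigenvalues) *
      (star (Matrix.posSemidef_conjTranspose_mul_self X).1.eigenvectorUnitary :
        Matrix k k ℂ)).trace.re


/-- The perturbed density matrix `D^h = e^{log D + h} / Tr(e^{log D + h})`. -/
def pert {k : Type*} [Fintype k] [DecidableEq k] (D h : Matrix k k ℂ) : Matrix k k ℂ :=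
  (NormedSpace.exp (matLog D + h)).trace⁻¹ • NormedSpace.exp (matLog D + h)

section FunctionalCalculus

open Polynomial

variable {k : Type*} [Fintype k] [DecidableEq k]

theorem cfc_unitary_conj_diagonal (U : unitary (Matrix k k ℂ)) (d : k → ℝ) (f : ℝ → ℝ) :
    cfc f ((U : Matrix k k ℂ) * diagonal (fun i => (d i : ℂ)) * star (U : Matrix k k ℂ)) =
      U * diagonal (fun i => (f (d i) : ℂ)) * star (U : Matrix k k ℂ) := by
  classical
  set A := (U : Matrix k k ℂ) * diagonal (fun i => (d i : ℂ)) * star (U : Matrix k k ℂ)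
  have hA : IsSelfAdjoint A :=
    IsSelfAdjoint.conjugate (isHermitian_diagonal_of_self_adjoint (fun i => (d i : ℂ))
      (by ext; simp)).isSelfAdjoint _
  -- Both sides are `p(A)` for a polynomial `p` interpolating `f` on `spectrum ℝ A ∪ range d`.
  let s : Finset ℝ := (spectrum ℝ A).toFinite.toFinset ∪ Finset.univ.image d
  let p : ℝ[X] := Lagrange.interpolate s id f
  have hp : ∀ x ∈ s, p.eval x = f x := fun x hx =>
    Lagrange.eval_interpolate_at_node f (Set.injOn_id _) hx
  have hdiag : aeval (diagonal fun i => (d i : ℂ)) p = diagonal fun i => (f (d i) : ℂ) := by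
    rw [← diagonalAlgHom_apply ℝ, aeval_algHom_apply, aeval_pi_apply, diagonalAlgHom_apply]
    congr! with i
    rw [← Complex.coe_algebraMap, aeval_algebraMap_apply_eq_algebraMap_eval,
      hp _ (by simp [s])]
  calc cfc f A = cfc (p.eval ·) A := cfc_congr fun x hx => (hp x (by simp [s, hx])).symm
    _ = aeval A p := cfc_polynomial p A
    _ = Unitary.conjStarAlgAut ℝ _ U (aeval (diagonal fun i => (d i : ℂ)) p) :=
        aeval_algHom_apply (Unitary.conjStarAlgAut ℝ _ U) _ p
    _ = _ := by rw [hdiag]; rfl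

theorem hermCalc_eq_cfc {A : Matrix k k ℂ} (hA : A.IsHermitian) (f : ℝ → ℝ) :
    hermCalc f A = cfc f A := by
  rw [hermCalc, dif_pos hA, hA.cfc_eq]
  rfl

theorem _root_.Matrix.IsHermitian.trace_cfc {A : Matrix k k ℂ} (hA : A.IsHermitian)
    (f : ℝ → ℝ) :
    (cfc f A).trace = ∑ i, (f (hA.eigenvalues i) : ℂ) := by
  rw [hA.cfc_eq, IsHermitian.cfc, Unitary.conjStarAlgAut_apply, trace_mul_cycle,
    Unitary.coe_star_mul_self, one_mul, trace_diagonal]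
  rfl

theorem matLog_eq_conj_diagonal {A : Matrix k k ℂ} (hA : A.IsHermitian) :
    matLog A = (hA.eigenvectorUnitary : Matrix k k ℂ) *
      diagonal (fun i => (Real.log (hA.eigenvalues i) : ℂ)) *
        star (hA.eigenvectorUnitary : Matrix k k ℂ) := by
  rw [matLog, hermCalc, dif_pos hA]

end FunctionalCalculus

section Kronecker

variable {k₁ k₂ : Type*} [Fintype k₁] [Fintype k₂]

theorem kronecker_conj_kronecker (U X : Matrix k₁ k₁ ℂ) (V Y : Matrix k₂ k₂ ℂ) :
    (U ⊗ₖ V) * (X ⊗ₖ Y) * star (U ⊗ₖ V) = (U * X * star U) ⊗ₖ (V * Y * star V) := by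
  simp only [star_eq_conjTranspose, conjTranspose_kronecker, mul_kronecker_mul]

variable [DecidableEq k₁] [DecidableEq k₂]

theorem matLog_kronecker {A : Matrix k₁ k₁ ℂ} {B : Matrix k₂ k₂ ℂ} (hA : A.PosDef)
    (hB : B.PosDef) : matLog (A ⊗ₖ B) = matLog A ⊗ₖ 1 + 1 ⊗ₖ matLog B := by
  set U := hA.1.eigenvectorUnitary
  set V := hB.1.eigenvectorUnitary
  let UV : unitary (Matrix (k₁ × k₂) (k₁ × k₂) ℂ) :=
    ⟨(U : Matrix k₁ k₁ ℂ) ⊗ₖ (V : Matrix k₂ k₂ ℂ), kronecker_mem_unitary U.2 V.2⟩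
  have hAB : A ⊗ₖ B = (UV : Matrix (k₁ × k₂) (k₁ × k₂) ℂ) *
      diagonal (fun p => ((hA.1.eigenvalues p.1 * hB.1.eigenvalues p.2 : ℝ) : ℂ)) *
        star (UV : Matrix (k₁ × k₂) (k₁ × k₂) ℂ) := by
    have hdiag : diagonal (fun p : k₁ × k₂ =>
          ((hA.1.eigenvalues p.1 * hB.1.eigenvalues p.2 : ℝ) : ℂ)) =
        diagonal (RCLike.ofReal ∘ hA.1.eigenvalues) ⊗ₖ
          diagonal (RCLike.ofReal ∘ hB.1.eigenvalues) := by
      rw [diagonal_kronecker_diagonal]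
      push_cast
      rfl
    rw [hdiag, kronecker_conj_kronecker]
    conv_lhs => rw [hA.1.spectral_theorem, hB.1.spectral_theorem]
    rfl
  have hlog : diagonal (fun p : k₁ × k₂ =>
        ((Real.log (hA.1.eigenvalues p.1 * hB.1.eigenvalues p.2) : ℝ) : ℂ)) =
      diagonal (fun i => (Real.log (hA.1.eigenvalues i) : ℂ)) ⊗ₖ 1 +
        1 ⊗ₖ diagonal (fun j => (Real.log (hB.1.eigenvalues j) : ℂ)) := by
    rw [← diagonal_one, ← diagonal_one, diagonal_kronecker_diagonal, diagonal_kronecker_diagonal,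
      diagonal_add]
    congr! with p
    rw [Real.log_mul (hA.eigenvalues_pos _).ne' (hB.eigenvalues_pos _).ne']
    push_cast
    ring
  rw [matLog_eq_conj_diagonal hA.1, matLog_eq_conj_diagonal hB.1, matLog,
    hermCalc_eq_cfc (hA.kronecker hB).1, hAB, cfc_unitary_conj_diagonal, hlog, mul_add, add_mul,
    kronecker_conj_kronecker, kronecker_conj_kronecker, mul_one, mul_one,
    Unitary.mul_star_self_of_mem U.2, Unitary.mul_star_self_of_mem V.2]

end Kronecker

section Entropy

variable {k : Type*} [Fintype k] [DecidableEq k]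

theorem vnEntropy_eq_neg_re_trace {D : Matrix k k ℂ} (hD : D.IsHermitian) :
    vnEntropy D = -(D * matLog D).trace.re := by
  have hcont : ∀ f : ℝ → ℝ, ContinuousOn f (spectrum ℝ D) := fun f =>
    (Set.toFinite _).continuousOn f
  have hmul : D * matLog D = cfc (fun x => x * Real.log x) D := by
    rw [matLog, hermCalc_eq_cfc hD, cfc_mul (fun x => x) Real.log D (hcont _) (hcont _),
      cfc_id' ℝ D]
  rw [vnEntropy, dif_pos hD, hmul, hD.trace_cfc, Complex.re_sum, ← Finset.sum_neg_distrib]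
  simp [Real.negMulLog]

theorem re_trace_conj_diagonal_mul_conj_diagonal (U V : Matrix k k ℂ) (a b : k → ℝ) :
    ((U * diagonal (fun i => (a i : ℂ)) * star U) *
        (V * diagonal (fun j => (b j : ℂ)) * star V)).trace.re =
      ∑ j, ∑ i, Complex.normSq ((star V * U) j i) * a i * b j := by
  have hcycle : ((U * diagonal (fun i => (a i : ℂ)) * star U) *
      (V * diagonal (fun j => (b j : ℂ)) * star V)).trace =
      ((star V * U) * diagonal (fun i => (a i : ℂ)) * star (star V * U) *
        diagonal (fun j => (b j : ℂ))).trace := by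
    simp only [star_mul, star_star, ← Matrix.mul_assoc]
    rw [trace_mul_comm]
    simp only [Matrix.mul_assoc]
  rw [hcycle, trace, Complex.re_sum]
  generalize star V * U = W
  refine Finset.sum_congr rfl fun j _ => ?_
  simp only [diag_apply, mul_diagonal]
  simp only [mul_apply, star_apply, Finset.sum_mul, Complex.re_sum]
  refine Finset.sum_congr rfl fun i _ => ?_
  simp only [diagonal_apply, mul_ite, ite_mul, mul_zero, zero_mul, apply_ite Complex.re,
    Complex.zero_re, Finset.sum_ite_eq', Finset.mem_univ, if_true]
  rw [mul_right_comm (W j i), Complex.star_def, Complex.mul_conj]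
  norm_cast

end Entropy

section Klein

variable {k : Type*} [Fintype k] [DecidableEq k]

theorem normSq_mem_doublyStochastic {W : Matrix k k ℂ} (hW : W ∈ unitary (Matrix k k ℂ)) :
    Matrix.of (fun i j => Complex.normSq (W i j)) ∈ doublyStochastic ℝ k := by
  have hsum : ∀ i : k, ∀ M : Matrix k k ℂ, M * star M = 1 → ∑ j, Complex.normSq (M i j) = 1 :=
    fun i M hM => by
      have := congr_fun₂ hM i i
      simp only [mul_apply, star_apply, Complex.star_def, Complex.mul_conj, one_apply_eq] at this
      exact_mod_cast this
  refine mem_doublyStochastic_iff_sum.2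
    ⟨fun i j => Complex.normSq_nonneg _, fun i => ?_, fun j => ?_⟩
  · exact hsum i W (Unitary.mul_star_self_of_mem hW)
  · simpa [star_apply, Complex.normSq_conj] using
      hsum j (star W) (by rw [star_star]; exact Unitary.star_mul_self_of_mem hW)

theorem sub_le_mul_sub_log {a b : ℝ} (ha : 0 ≤ a) (hb : 0 < b) :
    a - b ≤ a * (Real.log a - Real.log b) := by
  rcases ha.eq_or_lt with rfl | ha
  · simpa using hb.le
  · have h := Real.log_le_sub_one_of_pos (div_pos hb ha)
    rw [Real.log_div hb.ne' ha.ne'] at h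
    have := mul_le_mul_of_nonneg_left h ha.le
    rw [mul_sub_one, mul_div_cancel₀ _ ha.ne'] at this
    linarith

theorem sum_mul_log_le_of_mem_doublyStochastic {q : Matrix k k ℝ}
    (hq : q ∈ doublyStochastic ℝ k) {a b : k → ℝ} (ha : ∀ i, 0 ≤ a i) (hb : ∀ j, 0 < b j)
    (hab : ∑ i, a i = ∑ j, b j) :
    ∑ j, ∑ i, q j i * a i * Real.log (b j) ≤ ∑ i, a i * Real.log (a i) := by
  have hcol : ∀ c : k → ℝ, ∑ j, ∑ i, q j i * c i = ∑ i, c i := fun c => by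
    rw [Finset.sum_comm]
    simp_rw [← Finset.sum_mul, sum_col_of_mem_doublyStochastic hq, one_mul]
  have hrow : ∑ j, ∑ i, q j i * b j = ∑ j, b j := by
    simp_rw [← Finset.sum_mul, sum_row_of_mem_doublyStochastic hq, one_mul]
  calc ∑ j, ∑ i, q j i * a i * Real.log (b j)
      = ∑ j, ∑ i, q j i * (a i * Real.log (a i)) -
          ∑ j, ∑ i, q j i * (a i * (Real.log (a i) - Real.log (b j))) := by
        simp only [← Finset.sum_sub_distrib]
        ring_nf
    _ ≤ ∑ j, ∑ i, q j i * (a i * Real.log (a i)) - ∑ j, ∑ i, q j i * (a i - b j) := by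
        gcongr with j _ i _
        · exact nonneg_of_mem_doublyStochastic hq
        · exact sub_le_mul_sub_log (ha i) (hb j)
    _ = ∑ i, a i * Real.log (a i) := by
        simp only [mul_sub, Finset.sum_sub_distrib, hcol, hrow, hab, sub_self, sub_zero]

theorem relEntropy_nonneg {D E : Matrix k k ℂ} (hD : D.PosSemidef) (hE : E.PosDef)
    (htr : D.trace = E.trace) : 0 ≤ relEntropy D E := by
  set U := hD.1.eigenvectorUnitary
  set V := hE.1.eigenvectorUnitary
  have hcross : (D * matLog E).trace.re = ∑ j, ∑ i,
      Complex.normSq ((star (V : Matrix k k ℂ) * U) j i) * hD.1.eigenvalues i *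
        Real.log (hE.1.eigenvalues j) := by
    rw [matLog_eq_conj_diagonal hE.1]
    conv_lhs => rw [hD.1.spectral_theorem]
    exact re_trace_conj_diagonal_mul_conj_diagonal _ _ _ _
  have hsum : ∑ i, hD.1.eigenvalues i = ∑ j, hE.1.eigenvalues j := by
    have := hD.1.trace_eq_sum_eigenvalues.symm.trans (htr.trans hE.1.trace_eq_sum_eigenvalues)
    exact_mod_cast this
  rw [relEntropy, mul_sub, trace_sub, Complex.sub_re, ← neg_neg (D * matLog D).trace.re,
    ← vnEntropy_eq_neg_re_trace hD.1, vnEntropy, dif_pos hD.1, hcross, sub_nonneg]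
  simpa [Real.negMulLog] using sum_mul_log_le_of_mem_doublyStochastic
    (normSq_mem_doublyStochastic (star V * U).2) hD.eigenvalues_nonneg hE.eigenvalues_pos hsum

end Klein

section PartialTrace

variable {k₁ k₂ : Type*} [Fintype k₁] [Fintype k₂]

theorem trace_ptraceR (D : Matrix (k₁ × k₂) (k₁ × k₂) ℂ) : (ptraceR D).trace = D.trace := by
  simp [trace, ptraceR, Fintype.sum_prod_type]

theorem trace_ptraceL (D : Matrix (k₁ × k₂) (k₁ × k₂) ℂ) : (ptraceL D).trace = D.trace := by
  simp [trace, ptraceL, Fintype.sum_prod_type_right]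

omit [Fintype k₁] in
theorem isHermitian_ptraceR {D : Matrix (k₁ × k₂) (k₁ × k₂) ℂ}
    (hD : D.IsHermitian) : (ptraceR D).IsHermitian := by
  ext i j
  simp only [conjTranspose_apply, ptraceR, of_apply, star_sum]
  exact Finset.sum_congr rfl fun s _ => hD.apply (i, s) (j, s)

omit [Fintype k₂] in
theorem isHermitian_ptraceL {D : Matrix (k₁ × k₂) (k₁ × k₂) ℂ}
    (hD : D.IsHermitian) : (ptraceL D).IsHermitian :=
  isHermitian_ptraceR (hD.submatrix Prod.swap)

theorem posSemidef_ptraceR {D : Matrix (k₁ × k₂) (k₁ × k₂) ℂ}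
    (hD : D.PosSemidef) : (ptraceR D).PosSemidef := by
  classical
  let P : k₂ → Matrix (k₁ × k₂) k₁ ℂ := fun s => .of fun p j => if p = (j, s) then 1 else 0
  have hsum : ptraceR D = ∑ s, (P s)ᴴ * D * P s := by
    ext i j
    simp [P, ptraceR, Matrix.sum_apply, mul_apply]
  rw [hsum]
  exact posSemidef_sum _ fun s _ => hD.conjTranspose_mul_mul_same (P s)

theorem posSemidef_ptraceL {D : Matrix (k₁ × k₂) (k₁ × k₂) ℂ}
    (hD : D.PosSemidef) : (ptraceL D).PosSemidef :=
  posSemidef_ptraceR (hD.submatrix Prod.swap)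

theorem trace_mul_kronecker_one [DecidableEq k₂] (D : Matrix (k₁ × k₂) (k₁ × k₂) ℂ)
    (X : Matrix k₁ k₁ ℂ) :
    (D * (X ⊗ₖ 1)).trace = (ptraceR D * X).trace := by
  simp only [trace, diag_apply, mul_apply, kroneckerMap_apply, one_apply, mul_ite, mul_one,
    mul_zero, Fintype.sum_prod_type, Finset.sum_ite_eq', Finset.mem_univ, if_true, ptraceR,
    of_apply, Finset.sum_mul]
  exact Finset.sum_congr rfl fun _ _ => Finset.sum_comm

theorem trace_mul_one_kronecker [DecidableEq k₁] (D : Matrix (k₁ × k₂) (k₁ × k₂) ℂ)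
    (Y : Matrix k₂ k₂ ℂ) :
    (D * (1 ⊗ₖ Y)).trace = (ptraceL D * Y).trace := by
  simp only [trace, diag_apply, mul_apply, kroneckerMap_apply, one_apply, ite_mul, one_mul,
    zero_mul, mul_ite, mul_zero, Fintype.sum_prod_type, Finset.sum_ite_irrel,
    Finset.sum_const_zero, Finset.sum_ite_eq', Finset.mem_univ, if_true, ptraceL, of_apply,
    Finset.sum_mul]
  exact Finset.sum_comm.trans (Finset.sum_congr rfl fun _ _ => Finset.sum_comm)

end PartialTrace

theorem relEntropy_kronecker {k₁ k₂ : Type*} [Fintype k₁] [DecidableEq k₁] [Fintype k₂]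
    [DecidableEq k₂] {D : Matrix (k₁ × k₂) (k₁ × k₂) ℂ} (hD : D.IsHermitian)
    {A : Matrix k₁ k₁ ℂ} (hA : A.PosDef) {B : Matrix k₂ k₂ ℂ} (hB : B.PosDef) :
    relEntropy D (A ⊗ₖ B) = relEntropy (ptraceR D) A + relEntropy (ptraceL D) B +
      mutualEntropy D := by
  rw [mutualEntropy, vnEntropy_eq_neg_re_trace (isHermitian_ptraceR hD),
    vnEntropy_eq_neg_re_trace (isHermitian_ptraceL hD), vnEntropy_eq_neg_re_trace hD]
  simp only [relEntropy, matLog_kronecker hA hB, Matrix.mul_sub, Matrix.mul_add, trace_sub,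
    trace_add, trace_mul_kronecker_one, trace_mul_one_kronecker, Complex.sub_re, Complex.add_re]
  ring

/-- the mutual entropy is bounded by the relative entropy with respect
to any product reference state. -/
theorem mutualEntropy_le_relEntropy_product {m n : ℕ}
    (ϖ : Matrix (Fin m × Fin n) (Fin m × Fin n) ℂ)
    (hϖ : ϖ.PosDef) (hϖtr : ϖ.trace = 1)
    (σL : Matrix (Fin m) (Fin m) ℂ) (hσL : σL.PosDef) (hσLtr : σL.trace = 1)
    (σR : Matrix (Fin n) (Fin n) ℂ) (hσR : σR.PosDef) (hσRtr : σR.trace = 1) :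
    mutualEntropy ϖ ≤ relEntropy ϖ (σL ⊗ₖ σR) := by
  have hL := relEntropy_nonneg (posSemidef_ptraceR hϖ.posSemidef) hσL
    (by rw [trace_ptraceR, hϖtr, hσLtr])
  have hR := relEntropy_nonneg (posSemidef_ptraceL hϖ.posSemidef) hσR
    (by rw [trace_ptraceL, hϖtr, hσRtr])
  rw [relEntropy_kronecker hϖ.isHermitian hσL hσR]
  linarith

end TAL
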